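/- arXiv:1309.5757 — 2 statements merged into one kernel-verified Lean document; each statement's English description precedes it below -/
import Mathlib

section
/- Let X₁, X₂, … be i.i.d. exponential random variables with mean 1, and let λ₁, λ₂, … be positive real numbers. Then for any t ≥ 0 and any integer k ≥ 1: (t^k / ∏_{i=1}^k (k + λ_i t)) · ∏_{i=1}^k λ_i ≤ ℙ(Σ_{i=1}^k X_i/λ_i ≤ t) ≤ (e t / k)^k ∏_{i=1}^k λ_i. Moreover, if λ_i ≥ λ > 0 for all i and Λ := Σ_{i=1}^k 1/λ_i, then for any t ≥ Λ, ℙ(Σ_{i=1}^k X_i/λ_i ≥ t) ≤ exp(−λ(t − Λ)² / (2t)). -/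
open MeasureTheory ProbabilityTheory Real Set

noncomputable section

/-! The lower bound for `ℙ(S ≤ t)`, `S = ∑ Xᵢ/λᵢ`, comes from the event that every `Xᵢ/λᵢ` is
at most `t/k`: by independence its probability is `∏ (1 - exp (-λᵢ t/k))`, and
`1 - exp (-x) ≥ x/(1+x)`. The other two bounds are Chernoff bounds, with
`𝔼 exp (θ Xᵢ/λᵢ) = (1 - θ/λᵢ)⁻¹` for `θ < λᵢ`. For `ℙ(S ≤ t)` evaluate at `-θ` with `θ = k/t`
and use `(1 + θ/λᵢ)⁻¹ ≤ λᵢ/θ`. For `ℙ(S ≥ t)`, comparing power series gives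
`-log (1 - x) ≤ x + x²/(2(1 - x))`, so the product is at most `exp ((θ + θ²/(2(λ - θ))) Λ)`;
take `θ = λ(t - Λ)/t`, for which `λ - θ = λΛ/t`. -/

lemma expMeasure_eq_withDensity (r : ℝ) :
    expMeasure r = volume.withDensity fun x ↦ ENNReal.ofReal (exponentialPDFReal r x) := rfl

lemma exponentialPDFReal_mul_exp (r s x : ℝ) :
    exponentialPDFReal r x * exp (s * x) = (Ici 0).indicator (fun x ↦ r * exp ((s - r) * x)) x := by
  by_cases hx : 0 ≤ x
  · rw [exponentialPDFReal, gammaPDFReal, if_pos hx, indicator_of_mem (mem_Ici.2 hx)]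
    simp only [sub_self, rpow_zero, rpow_one, Gamma_one, div_one, mul_one, mul_assoc, ← exp_add]
    ring_nf
  · simp [exponentialPDFReal, gammaPDFReal, hx]

lemma integrable_exp_mul_expMeasure {r s : ℝ} (hr : 0 < r) (hs : s < r) :
    Integrable (fun x ↦ exp (s * x)) (expMeasure r) := by
  rw [expMeasure_eq_withDensity, integrable_withDensity_iff (by fun_prop) (by simp)]
  simp_rw [ENNReal.toReal_ofReal (exponentialPDFReal_nonneg hr _), mul_comm (exp _),
    exponentialPDFReal_mul_exp]
  rw [integrable_indicator_iff measurableSet_Ici, integrableOn_Ici_iff_integrableOn_Ioi]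
  exact (integrableOn_exp_mul_Ioi (by linarith) 0).const_mul r

lemma integral_exp_mul_expMeasure {r s : ℝ} (hr : 0 < r) (hs : s < r) :
    ∫ x, exp (s * x) ∂expMeasure r = r / (r - s) := by
  rw [expMeasure_eq_withDensity,
    integral_withDensity_eq_integral_toReal_smul₀ (by fun_prop) (by simp)]
  simp_rw [ENNReal.toReal_ofReal (exponentialPDFReal_nonneg hr _), smul_eq_mul,
    exponentialPDFReal_mul_exp]
  rw [integral_indicator measurableSet_Ici, integral_Ici_eq_integral_Ioi, integral_const_mul,
    integral_exp_mul_Ioi (by linarith), mul_zero, exp_zero, ← neg_div_neg_eq, neg_neg, neg_sub,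
    mul_one_div]

lemma mgf_id_expMeasure {r s : ℝ} (hr : 0 < r) (hs : s < r) :
    mgf id (expMeasure r) s = r / (r - s) :=
  integral_exp_mul_expMeasure hr hs

section ExponentialVariables

variable {Ω : Type*} [MeasurableSpace Ω] {P : Measure Ω}

lemma measure_le_of_map_eq_expMeasure {Y : Ω → ℝ} (hY : Measurable Y) {r : ℝ} (hr : 0 < r)
    (hdist : P.map Y = expMeasure r) {c : ℝ} (hc : 0 ≤ c) :
    P {ω | Y ω ≤ c} = ENNReal.ofReal (1 - exp (-(r * c))) := by
  have := isProbabilityMeasure_expMeasure hr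
  rw [show {ω | Y ω ≤ c} = Y ⁻¹' Iic c from rfl, ← Measure.map_apply hY measurableSet_Iic, hdist,
    ← ofReal_cdf, cdf_expMeasure_eq hr, if_pos hc]

lemma integrable_exp_mul_div_of_map_eq_expMeasure {Y : Ω → ℝ} (hY : Measurable Y)
    (hdist : P.map Y = expMeasure 1) {l θ : ℝ} (hl : 0 < l) (hθ : θ < l) :
    Integrable (fun ω ↦ exp (θ * (Y ω / l))) P := by
  have hθl : θ / l < 1 := (div_lt_one hl).2 hθ
  have h := integrable_exp_mul_expMeasure one_pos hθl
  rw [← hdist, integrable_map_measure (by fun_prop) hY.aemeasurable] at h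
  simpa only [Function.comp_def, mul_div_assoc', div_mul_eq_mul_div] using h

lemma mgf_div_of_map_eq_expMeasure {Y : Ω → ℝ} (hY : Measurable Y)
    (hdist : P.map Y = expMeasure 1) {l θ : ℝ} (hl : 0 < l) (hθ : θ < l) :
    mgf (fun ω ↦ Y ω / l) P θ = (1 - θ / l)⁻¹ := by
  simp_rw [div_eq_inv_mul (Y _), mgf_const_mul, ← mgf_id_map hY.aemeasurable, hdist]
  rw [mgf_id_expMeasure one_pos (by rwa [inv_mul_eq_div, div_lt_one hl]), one_div, inv_mul_eq_div]

end ExponentialVariables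

lemma div_one_add_le_one_sub_exp_neg {x : ℝ} (hx : -1 < x) : x / (1 + x) ≤ 1 - exp (-x) := by
  have h : exp (-x) ≤ (1 + x)⁻¹ := by
    rw [exp_neg]
    exact inv_anti₀ (by linarith) (by linarith [add_one_le_exp x])
  have : x / (1 + x) = 1 - (1 + x)⁻¹ := by field_simp [show 1 + x ≠ 0 by linarith]; ring
  linarith

lemma neg_log_one_sub_le {x : ℝ} (hx0 : 0 ≤ x) (hx1 : x < 1) :
    -log (1 - x) ≤ x + x ^ 2 / (2 * (1 - x)) := by
  have hlog := (hasSum_nat_add_iff' 1).2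
    (hasSum_pow_div_log_of_abs_lt_one (abs_lt.2 ⟨by linarith, hx1⟩))
  have hgeom := (hasSum_geometric_of_lt_one hx0 hx1).mul_left (x ^ 2 / 2)
  have key := hasSum_le (fun n ↦ ?_) hlog hgeom
  · simp only [Finset.range_one, Finset.sum_singleton, zero_add, pow_one, Nat.cast_zero,
      div_one] at key
    rw [mul_comm 2, ← div_div, div_eq_mul_inv _ (1 - x)]
    linarith
  · push_cast
    rw [div_mul_eq_mul_div, ← pow_add, add_comm 2]
    exact div_le_div_of_nonneg_left (by positivity) two_pos (by linarith [n.cast_nonneg (α := ℝ)])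

lemma inv_one_sub_le_exp {x : ℝ} (hx0 : 0 ≤ x) (hx1 : x < 1) :
    (1 - x)⁻¹ ≤ exp (x + x ^ 2 / (2 * (1 - x))) := by
  rw [← exp_log (inv_pos.2 (sub_pos.2 hx1)), log_inv]
  exact exp_le_exp.2 (neg_log_one_sub_le hx0 hx1)

lemma inv_one_sub_div_le_exp {θ l₀ l : ℝ} (hθ0 : 0 ≤ θ) (hθ : θ < l₀) (hl : l₀ ≤ l) :
    (1 - θ / l)⁻¹ ≤ exp ((θ + θ ^ 2 / (2 * (l₀ - θ))) / l) := by
  have hl0 : 0 < l := by linarith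
  refine (inv_one_sub_le_exp (by positivity) ((div_lt_one hl0).2 (by linarith))).trans ?_
  rw [exp_le_exp]
  calc θ / l + (θ / l) ^ 2 / (2 * (1 - θ / l)) = (θ + θ ^ 2 / (2 * (l - θ))) / l := by
        field_simp
    _ ≤ _ := by gcongr

lemma prod_inv_one_sub_div_le_exp {ι : Type*} {s : Finset ι} {lam : ι → ℝ} {θ l₀ : ℝ}
    (hθ0 : 0 ≤ θ) (hθ : θ < l₀) (hl : ∀ i ∈ s, l₀ ≤ lam i) :
    ∏ i ∈ s, (1 - θ / lam i)⁻¹ ≤ exp ((θ + θ ^ 2 / (2 * (l₀ - θ))) * ∑ i ∈ s, 1 / lam i) := by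
  rw [Finset.mul_sum, exp_sum]
  refine Finset.prod_le_prod (fun i hi ↦ ?_) fun i hi ↦ ?_
  · have : θ / lam i < 1 := (div_lt_one (by linarith [hl i hi])).2 (by linarith [hl i hi])
    exact inv_nonneg.2 (by linarith)
  · simpa only [mul_one_div] using inv_one_sub_div_le_exp hθ0 hθ (hl i hi)

section WeightedSum

variable {Ω ι : Type*} [MeasurableSpace Ω] {P : Measure Ω} {X : ι → Ω → ℝ} {lam : ι → ℝ}
  {s : Finset ι}

lemma integrable_exp_mul_sum_div (hmeas : ∀ i, Measurable (X i)) (hindep : iIndepFun X P)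
    (hdist : ∀ i, P.map (X i) = expMeasure 1) (hlam : ∀ i ∈ s, 0 < lam i) {θ : ℝ}
    (hθ : ∀ i ∈ s, θ < lam i) :
    Integrable (fun ω ↦ exp (θ * ∑ i ∈ s, X i ω / lam i)) P := by
  have := hindep.isProbabilityMeasure
  have h := (hindep.comp (fun i x ↦ x / lam i) fun i ↦ by fun_prop).integrable_exp_mul_sum
    (fun i ↦ (hmeas i).div_const (lam i)) (s := s) (t := θ) fun i hi ↦
      integrable_exp_mul_div_of_map_eq_expMeasure (hmeas i) (hdist i) (hlam i hi) (hθ i hi)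
  simpa only [Finset.sum_apply, Function.comp_apply] using h

lemma mgf_sum_div (hmeas : ∀ i, Measurable (X i)) (hindep : iIndepFun X P)
    (hdist : ∀ i, P.map (X i) = expMeasure 1) (hlam : ∀ i ∈ s, 0 < lam i) {θ : ℝ}
    (hθ : ∀ i ∈ s, θ < lam i) :
    mgf (fun ω ↦ ∑ i ∈ s, X i ω / lam i) P θ = ∏ i ∈ s, (1 - θ / lam i)⁻¹ := by
  have h := (hindep.comp (fun i x ↦ x / lam i) fun i ↦ by fun_prop).mgf_sum
    (fun i ↦ (hmeas i).div_const (lam i)) s (t := θ)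
  simp only [Function.comp_def] at h
  rw [← Finset.sum_fn, h]
  exact Finset.prod_congr rfl fun i hi ↦
    mgf_div_of_map_eq_expMeasure (hmeas i) (hdist i) (hlam i hi) (hθ i hi)

lemma measureReal_le_sum_div_le (hmeas : ∀ i, Measurable (X i)) (hindep : iIndepFun X P)
    (hdist : ∀ i, P.map (X i) = expMeasure 1) (hlam : ∀ i ∈ s, 0 < lam i) {θ : ℝ} (hθ0 : 0 ≤ θ)
    (hθ : ∀ i ∈ s, θ < lam i) (t : ℝ) :
    P.real {ω | t ≤ ∑ i ∈ s, X i ω / lam i} ≤ exp (-θ * t) * ∏ i ∈ s, (1 - θ / lam i)⁻¹ := by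
  have := hindep.isProbabilityMeasure
  rw [← mgf_sum_div hmeas hindep hdist hlam hθ]
  exact measure_ge_le_exp_mul_mgf t hθ0 (integrable_exp_mul_sum_div hmeas hindep hdist hlam hθ)

lemma measureReal_sum_div_le_le (hmeas : ∀ i, Measurable (X i)) (hindep : iIndepFun X P)
    (hdist : ∀ i, P.map (X i) = expMeasure 1) (hlam : ∀ i ∈ s, 0 < lam i) {θ : ℝ} (hθ0 : θ ≤ 0)
    (t : ℝ) :
    P.real {ω | ∑ i ∈ s, X i ω / lam i ≤ t} ≤ exp (-θ * t) * ∏ i ∈ s, (1 - θ / lam i)⁻¹ := by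
  have := hindep.isProbabilityMeasure
  have hθ : ∀ i ∈ s, θ < lam i := fun i hi ↦ hθ0.trans_lt (hlam i hi)
  rw [← mgf_sum_div hmeas hindep hdist hlam hθ]
  exact measure_le_le_exp_mul_mgf t hθ0 (integrable_exp_mul_sum_div hmeas hindep hdist hlam hθ)

lemma prod_measure_le_le_measure_sum_div_le (hindep : iIndepFun X P) (hlam : ∀ i ∈ s, 0 < lam i)
    {c : ι → ℝ} {t : ℝ} (hct : ∑ i ∈ s, c i ≤ t) :
    ∏ i ∈ s, P {ω | X i ω ≤ lam i * c i} ≤ P {ω | ∑ i ∈ s, X i ω / lam i ≤ t} := by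
  rw [← hindep.meas_biInter (s := fun i ↦ {ω | X i ω ≤ lam i * c i})
    fun i _ ↦ ⟨Iic (lam i * c i), measurableSet_Iic, rfl⟩]
  refine measure_mono fun ω hω ↦ ?_
  simp only [mem_iInter, mem_ofPred_eq] at hω ⊢
  refine le_trans (Finset.sum_le_sum fun i hi ↦ ?_) hct
  rw [div_le_iff₀ (hlam i hi), mul_comm]
  exact hω i hi

lemma measure_sum_div_nonpos_eq_zero (hmeas : ∀ i, Measurable (X i))
    (hdist : ∀ i, P.map (X i) = expMeasure 1) (hlam : ∀ i ∈ s, 0 < lam i) (hs : s.Nonempty) :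
    P {ω | ∑ i ∈ s, X i ω / lam i ≤ 0} = 0 := by
  refine measure_mono_null (t := ⋃ i ∈ s, {ω | X i ω ≤ 0}) (fun ω hω ↦ ?_)
    ((measure_biUnion_null_iff s.countable_toSet).2 fun i _ ↦ ?_)
  · by_contra h
    simp only [mem_iUnion, mem_ofPred_eq, not_exists, not_le] at h
    exact (Finset.sum_pos (fun i hi ↦ div_pos (h i hi) (hlam i hi)) hs).not_ge hω
  · rw [measure_le_of_map_eq_expMeasure (hmeas i) one_pos (hdist i) le_rfl]
    simp

lemma ofReal_prod_le_measure_sum_div_le (hmeas : ∀ i, Measurable (X i)) (hindep : iIndepFun X P)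
    (hdist : ∀ i, P.map (X i) = expMeasure 1) (hlam : ∀ i ∈ s, 0 < lam i) {t : ℝ} (ht : 0 ≤ t) :
    ENNReal.ofReal (∏ i ∈ s, lam i * t / (s.card + lam i * t))
      ≤ P {ω | ∑ i ∈ s, X i ω / lam i ≤ t} := by
  set n : ℝ := (s.card : ℝ)
  have hsum : ∑ _i ∈ s, t / n ≤ t := by
    rw [Finset.sum_const, nsmul_eq_mul]
    rcases (Nat.cast_nonneg s.card : (0 : ℝ) ≤ n).eq_or_lt with hn | hn
    · rw [← hn, zero_mul]; exact ht
    · rw [mul_div_cancel₀ _ hn.ne']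
  refine le_trans ?_ (prod_measure_le_le_measure_sum_div_le hindep hlam hsum)
  rw [ENNReal.ofReal_prod_of_nonneg fun i hi ↦ by have := hlam i hi; positivity]
  refine Finset.prod_le_prod' fun i hi ↦ ?_
  have hn : 0 < n := Nat.cast_pos.2 (Finset.card_pos.2 ⟨i, hi⟩)
  have hx : 0 ≤ lam i * (t / n) := by have := hlam i hi; positivity
  rw [measure_le_of_map_eq_expMeasure (hmeas i) one_pos (hdist i) hx, one_mul]
  refine ENNReal.ofReal_le_ofReal (le_of_eq_of_le ?_ (div_one_add_le_one_sub_exp_neg (by linarith)))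
  field_simp

lemma measure_sum_div_le_le (hmeas : ∀ i, Measurable (X i)) (hindep : iIndepFun X P)
    (hdist : ∀ i, P.map (X i) = expMeasure 1) (hlam : ∀ i ∈ s, 0 < lam i) (hs : s.Nonempty)
    {t : ℝ} (ht : 0 ≤ t) :
    P {ω | ∑ i ∈ s, X i ω / lam i ≤ t}
      ≤ ENNReal.ofReal ((exp 1 * t / s.card) ^ s.card * ∏ i ∈ s, lam i) := by
  rcases ht.eq_or_lt with rfl | ht
  · simp [measure_sum_div_nonpos_eq_zero hmeas hdist hlam hs]
  have := hindep.isProbabilityMeasure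
  set n : ℝ := (s.card : ℝ)
  have hn : 0 < n := Nat.cast_pos.2 (Finset.card_pos.2 hs)
  rw [← ofReal_measureReal]
  refine ENNReal.ofReal_le_ofReal ?_
  calc P.real {ω | ∑ i ∈ s, X i ω / lam i ≤ t}
      ≤ exp (n / t * t) * ∏ i ∈ s, (1 + n / t / lam i)⁻¹ := by
        simpa only [neg_neg, neg_div, sub_neg_eq_add] using
          measureReal_sum_div_le_le hmeas hindep hdist hlam (θ := -(n / t))
            (neg_nonpos.2 (by positivity)) t
    _ ≤ exp (n / t * t) * ∏ i ∈ s, lam i / (n / t) := by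
        refine mul_le_mul_of_nonneg_left (Finset.prod_le_prod (fun i hi ↦ ?_) fun i hi ↦ ?_)
          (exp_pos _).le
        all_goals have := hlam i hi
        · positivity
        · rw [← inv_div (n / t) (lam i)]
          exact inv_anti₀ (b := n / t / lam i) (by positivity) (by linarith)
    _ = (exp 1 * t / n) ^ s.card * ∏ i ∈ s, lam i := by
        rw [div_mul_cancel₀ _ ht.ne', Finset.prod_div_distrib, Finset.prod_const, ← exp_one_pow,
          div_pow, div_pow, mul_pow]
        field_simp

lemma measure_le_sum_div_le (hmeas : ∀ i, Measurable (X i)) (hindep : iIndepFun X P)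
    (hdist : ∀ i, P.map (X i) = expMeasure 1) (hs : s.Nonempty) {l₀ t : ℝ} (hl₀ : 0 < l₀)
    (hl : ∀ i ∈ s, l₀ ≤ lam i) (ht : ∑ i ∈ s, 1 / lam i ≤ t) :
    P {ω | t ≤ ∑ i ∈ s, X i ω / lam i}
      ≤ ENNReal.ofReal (exp (-(l₀ * (t - ∑ i ∈ s, 1 / lam i) ^ 2 / (2 * t)))) := by
  have := hindep.isProbabilityMeasure
  have hlam : ∀ i ∈ s, 0 < lam i := fun i hi ↦ hl₀.trans_le (hl i hi)
  set Λ := ∑ i ∈ s, 1 / lam i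
  have hΛ : 0 < Λ := Finset.sum_pos (fun i hi ↦ one_div_pos.2 (hlam i hi)) hs
  have ht0 : 0 < t := hΛ.trans_le ht
  set θ := l₀ * (t - Λ) / t
  have hgap : l₀ - θ = l₀ * Λ / t := by simp only [θ]; field_simp; ring
  have hθ0 : 0 ≤ θ := div_nonneg (mul_nonneg hl₀.le (sub_nonneg.2 ht)) ht0.le
  have hθ : θ < l₀ := by rw [← sub_pos, hgap]; positivity
  rw [← ofReal_measureReal]
  refine ENNReal.ofReal_le_ofReal ?_
  calc P.real {ω | t ≤ ∑ i ∈ s, X i ω / lam i}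
      ≤ exp (-θ * t) * ∏ i ∈ s, (1 - θ / lam i)⁻¹ :=
        measureReal_le_sum_div_le hmeas hindep hdist hlam hθ0
          (fun i hi ↦ hθ.trans_le (hl i hi)) t
    _ ≤ exp (-θ * t) * exp ((θ + θ ^ 2 / (2 * (l₀ - θ))) * Λ) := by
        gcongr
        exact prod_inv_one_sub_div_le_exp hθ0 hθ hl
    _ = exp (-(l₀ * (t - Λ) ^ 2 / (2 * t))) := by
        rw [← exp_add, hgap]
        congr 1
        simp only [θ]
        field_simp
        ring

end WeightedSum

theorem exponential_sum_tails_general {Ω : Type} [MeasurableSpace Ω] (P : Measure Ω)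
    (X : ℕ → Ω → ℝ) (hmeas : ∀ i, Measurable (X i))
    (hindep : iIndepFun X P)
    (hdist : ∀ i, Measure.map (X i) P = expMeasure 1)
    (lam : ℕ → ℝ) (hlam : ∀ i, 0 < lam i) :
    (∀ (t : ℝ) (k : ℕ), 0 ≤ t → 1 ≤ k →
      ENNReal.ofReal ((t ^ k / ∏ i ∈ Finset.range k, ((k : ℝ) + lam i * t))
          * ∏ i ∈ Finset.range k, lam i)
        ≤ P {o | (∑ i ∈ Finset.range k, X i o / lam i) ≤ t} ∧
      P {o | (∑ i ∈ Finset.range k, X i o / lam i) ≤ t}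
        ≤ ENNReal.ofReal ((Real.exp 1 * t / k) ^ k * ∏ i ∈ Finset.range k, lam i)) ∧
    (∀ (lam₀ : ℝ) (k : ℕ) (t : ℝ), 1 ≤ k → 0 < lam₀ → (∀ i, lam₀ ≤ lam i) →
      (∑ i ∈ Finset.range k, 1 / lam i) ≤ t →
      P {o | t ≤ ∑ i ∈ Finset.range k, X i o / lam i}
        ≤ ENNReal.ofReal (Real.exp
            (-(lam₀ * (t - ∑ i ∈ Finset.range k, 1 / lam i) ^ 2 / (2 * t))))) := by
  have hlam' : ∀ k, ∀ i ∈ Finset.range k, 0 < lam i := fun _ i _ ↦ hlam i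
  have hne : ∀ k, 1 ≤ k → (Finset.range k).Nonempty := fun k hk ↦
    Finset.nonempty_range_iff.2 (by omega)
  refine ⟨fun t k ht hk ↦ ⟨?_, ?_⟩, fun lam₀ k t hk hl₀ hl ht ↦ ?_⟩
  · convert ofReal_prod_le_measure_sum_div_le hmeas hindep hdist (hlam' k) ht using 2
    rw [Finset.card_range, Finset.prod_div_distrib, Finset.prod_mul_distrib, Finset.prod_const,
      Finset.card_range]
    ring
  · simpa only [Finset.card_range] using
      measure_sum_div_le_le hmeas hindep hdist (hlam' k) (hne k hk) ht
  · exact measure_le_sum_div_le hmeas hindep hdist (hne k hk) hl₀ (fun i _ ↦ hl i) ht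

/-- **Tail estimates for weighted sums of exponentials** (Lemma 2.1). Let
`X₁, X₂, …` be i.i.d. mean-one exponential random variables and `λ₁, λ₂, … > 0`.
Then for any `t ≥ 0` and `k ≥ 1`,
`(t^k/∏(k+λᵢt)) ∏λᵢ ≤ ℙ(Σ Xᵢ/λᵢ ≤ t) ≤ (et/k)^k ∏λᵢ`, and if `λᵢ ≥ λ > 0` for
all `i` and `Λ := Σᵢ₌₁ᵏ 1/λᵢ`, then for any `t ≥ Λ`,
`ℙ(Σ Xᵢ/λᵢ ≥ t) ≤ exp(-λ(t-Λ)²/(2t))`. -/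
theorem exponential_sum_tails {Ω : Type} [MeasurableSpace Ω] (P : Measure Ω)
    [IsProbabilityMeasure P]
    (X : ℕ → Ω → ℝ) (hmeas : ∀ i, Measurable (X i))
    (hindep : iIndepFun X P)
    (hdist : ∀ i, Measure.map (X i) P = expMeasure 1)
    (lam : ℕ → ℝ) (hlam : ∀ i, 0 < lam i) :
    (∀ (t : ℝ) (k : ℕ), 0 ≤ t → 1 ≤ k →
      ENNReal.ofReal ((t ^ k / ∏ i ∈ Finset.range k, ((k : ℝ) + lam i * t))
          * ∏ i ∈ Finset.range k, lam i)
        ≤ P {o | (∑ i ∈ Finset.range k, X i o / lam i) ≤ t} ∧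
      P {o | (∑ i ∈ Finset.range k, X i o / lam i) ≤ t}
        ≤ ENNReal.ofReal ((Real.exp 1 * t / k) ^ k * ∏ i ∈ Finset.range k, lam i)) ∧
    (∀ (lam₀ : ℝ) (k : ℕ) (t : ℝ), 1 ≤ k → 0 < lam₀ → (∀ i, lam₀ ≤ lam i) →
      (∑ i ∈ Finset.range k, 1 / lam i) ≤ t →
      P {o | t ≤ ∑ i ∈ Finset.range k, X i o / lam i}
        ≤ ENNReal.ofReal (Real.exp
            (-(lam₀ * (t - ∑ i ∈ Finset.range k, 1 / lam i) ^ 2 / (2 * t))))) :=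
  exponential_sum_tails_general P X hmeas hindep hdist lam hlam
end
end

section
/- Fix a dimension d ≥ 1 and let ‖·‖₁ be the ℓ¹-norm on ℤ^d. For any α, β > 0 there exists a constant c > 0 depending only on α, β, and d such that for every x ∈ ℤ^d \ {0}: (a) if 0 < α < d, 0 < β < d, and α + β > d, then Σ_{y ∈ ℤ^d, y ≠ 0, y ≠ x} ‖y‖₁^{−β} ‖x−y‖₁^{−α} ≤ c ‖x‖₁^{d−β−α}; (b) if α > d, then Σ_{y ∈ ℤ^d, y ≠ 0, y ≠ x} ‖y‖₁^{−α} ‖x−y‖₁^{−α} ≤ c ‖x‖₁^{−α}. -/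
open MeasureTheory Filter Set
open scoped ENNReal NNReal

noncomputable section

/-- The ℓ¹-norm of a lattice point of `ℤ^d`, as a real number. -/
def l1 {d : ℕ} (x : Fin d → ℤ) : ℝ := ∑ i, |(x i : ℝ)|

/-!
Write `N y` for the ℓ¹-norm. The box `[-b, b]^d` has `(2b+1)^d` points, so the dyadic shell
`2^k ≤ N y < 2^(k+1)` contributes at most `8^d (2^k)^(d-γ)` to `∑ N y^(-γ)`. Summing these
geometric series gives `∑_{0 < N y ≤ b} N y^(-β) = O(b^(d-β))` for `0 ≤ β < d` and
`∑_{N y ≥ m} N y^(-γ) = O(m^(d-γ))` for `γ > d`.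

After the substitution `y ↦ x - y`, which swaps the roles of `α` and `β`, it suffices to sum over
the `y ≠ 0` at least as close to `0` as to `x`; there `N (x - y) ≥ N x / 2`. In case (a) the `y`
with `N y ≤ N x` contribute `O(N x^(-α) N x^(d-β))` by the first bound, and those with
`N y ≥ N x`, where also `N (x - y) ≥ N y`, contribute `O(N x^(d-α-β))` by the second one with
`γ = α + β`. In case (b) `N y^(-α)` is summable over all `y ≠ 0`, and the other factor is
`N (x - y)^(-α) ≤ 2^α N x^(-α)`.
-/

theorem ENNReal.rpow_le_rpow_of_nonpos {a b : ℝ≥0∞} {z : ℝ} (hab : a ≤ b) (hz : z ≤ 0) :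
    b ^ z ≤ a ^ z := by
  rw [← neg_neg z, ENNReal.rpow_neg b, ENNReal.rpow_neg a]
  exact ENNReal.inv_le_inv.mpr (ENNReal.rpow_le_rpow hab (neg_nonneg.mpr hz))

theorem ENNReal.tsum_subtype_le_tsum_subtype {α : Type*} {s t : Set α} {f g : α → ℝ≥0∞}
    (hst : s ⊆ t) (hfg : ∀ y ∈ s, f y ≤ g y) : ∑' y : s, f y ≤ ∑' y : t, g y :=
  (ENNReal.tsum_le_tsum fun y : s => hfg y y.2).trans (ENNReal.tsum_mono_subtype g hst)

theorem ENNReal.sum_range_succ_pow_le {r : ℝ≥0∞} (hr0 : r ≠ 0) (hrt : r ≠ ⊤) (K : ℕ) :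
    ∑ k ∈ Finset.range (K + 1), r ^ k ≤ r ^ K * (1 - r⁻¹)⁻¹ := by
  have hreflect : ∀ k ∈ Finset.range (K + 1), r ^ k = r ^ K * r⁻¹ ^ (K - k) := fun k hk => by
    rw [← Nat.add_sub_of_le (Nat.lt_succ_iff.mp (Finset.mem_range.mp hk)), pow_add, mul_assoc,
      Nat.add_sub_cancel_left, ← mul_pow, ENNReal.mul_inv_cancel hr0 hrt, one_pow, mul_one]
  have hsum := Finset.sum_range_reflect (fun j => r⁻¹ ^ j) (K + 1)
  rw [Nat.add_sub_cancel] at hsum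
  rw [Finset.sum_congr rfl hreflect, ← Finset.mul_sum, hsum, ← ENNReal.tsum_geometric]
  gcongr
  exact ENNReal.sum_le_tsum _

theorem ENNReal.natCast_rpow_neg_le_of_le_two_mul {X m : ℕ} (h : m ≤ 2 * X) {a : ℝ}
    (ha : 0 ≤ a) : (X : ℝ≥0∞) ^ (-a) ≤ 2 ^ a * (m : ℝ≥0∞) ^ (-a) := by
  calc (X : ℝ≥0∞) ^ (-a) = 2 ^ a * (2 * (X : ℝ≥0∞)) ^ (-a) := by
        rw [ENNReal.mul_rpow_of_ne_top (by norm_num) (ENNReal.natCast_ne_top X), ← mul_assoc,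
          ← ENNReal.rpow_add _ _ (by norm_num) (by norm_num), add_neg_cancel, ENNReal.rpow_zero,
          one_mul]
    _ ≤ 2 ^ a * (m : ℝ≥0∞) ^ (-a) :=
        mul_le_mul_right (ENNReal.rpow_le_rpow_of_nonpos (by exact_mod_cast h) (by linarith)) _

theorem ENNReal.rpow_pow_comm (x : ℝ≥0∞) (y : ℝ) (n : ℕ) : (x ^ y) ^ n = (x ^ n) ^ y := by
  rw [← ENNReal.rpow_mul_natCast, mul_comm, ENNReal.rpow_natCast_mul]

theorem ENNReal.one_sub_inv_ne_top {r : ℝ≥0∞} (hr : r < 1) : (1 - r)⁻¹ ≠ ⊤ := by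
  simpa [ENNReal.inv_ne_top, tsub_eq_zero_iff_le] using hr

namespace LatticeSum

variable {d : ℕ}

def l1Nat (y : Fin d → ℤ) : ℕ := ∑ i, (y i).natAbs

theorem l1_eq_l1Nat (y : Fin d → ℤ) : l1 y = l1Nat y := by
  simp [l1, l1Nat, Nat.cast_natAbs]

theorem natAbs_le_l1Nat (y : Fin d → ℤ) (i : Fin d) : (y i).natAbs ≤ l1Nat y :=
  Finset.single_le_sum (f := fun i => (y i).natAbs) (fun _ _ => Nat.zero_le _) (Finset.mem_univ i)

theorem l1Nat_pos {y : Fin d → ℤ} (hy : y ≠ 0) : 0 < l1Nat y := by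
  obtain ⟨i, hi⟩ := Function.ne_iff.mp hy
  exact (Int.natAbs_pos.mpr hi).trans_le (natAbs_le_l1Nat y i)

theorem l1Nat_le_l1Nat_sub_add (x y : Fin d → ℤ) : l1Nat x ≤ l1Nat (x - y) + l1Nat y := by
  rw [l1Nat, l1Nat, l1Nat, ← Finset.sum_add_distrib]
  exact Finset.sum_le_sum fun i _ => by simpa using Int.natAbs_add_le (x i - y i) (y i)

theorem ofReal_l1_rpow {x : Fin d → ℤ} (hx : x ≠ 0) (e : ℝ) :
    ENNReal.ofReal (l1 x ^ e) = (l1Nat x : ℝ≥0∞) ^ e := by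
  rw [← ENNReal.ofReal_rpow_of_pos (by simpa [l1_eq_l1Nat] using l1Nat_pos hx), l1_eq_l1Nat,
    ENNReal.ofReal_natCast]

theorem tsum_le_of_forall_l1Nat_le {s : Set (Fin d → ℤ)} {b : ℕ} (hs : ∀ y ∈ s, l1Nat y ≤ b)
    {f : (Fin d → ℤ) → ℝ≥0∞} {c : ℝ≥0∞} (hf : ∀ y ∈ s, f y ≤ c) :
    ∑' y : s, f y ≤ ((2 * b + 1) ^ d : ℕ) * c := by
  have hbox : s ⊆ (Finset.Icc (-(b : Fin d → ℤ)) b : Set (Fin d → ℤ)) := fun y hy => by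
    have := hs y hy
    simp only [Finset.coe_Icc, Set.mem_Icc, Pi.le_def]
    refine ⟨fun i => ?_, fun i => ?_⟩ <;> simp <;> have := natAbs_le_l1Nat y i <;> omega
  calc ∑' y : s, f y ≤ ∑' _ : ↥(Finset.Icc (-(b : Fin d → ℤ)) b : Set (Fin d → ℤ)), c :=
        ENNReal.tsum_subtype_le_tsum_subtype hbox hf
    _ = ((2 * b + 1) ^ d : ℕ) * c := by
        rw [Finset.tsum_subtype' _ fun _ => c, Finset.sum_const, nsmul_eq_mul, Pi.card_Icc]
        simp only [Pi.neg_apply, Pi.natCast_apply, Int.card_Icc, Finset.prod_const,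
          Finset.card_univ, Fintype.card_fin]
        congr 3
        omega

def dyadicShell (k : ℕ) : Set (Fin d → ℤ) := {y | 2 ^ k ≤ l1Nat y ∧ l1Nat y < 2 ^ (k + 1)}

theorem mem_dyadicShell_log {y : Fin d → ℤ} (hy : l1Nat y ≠ 0) :
    y ∈ dyadicShell (Nat.log 2 (l1Nat y)) :=
  ⟨Nat.pow_log_le_self 2 hy, Nat.lt_pow_succ_log_self one_lt_two _⟩

theorem tsum_dyadicShell_le {γ : ℝ} (hγ : 0 ≤ γ) (k : ℕ) :
    ∑' y : dyadicShell (d := d) k, (l1Nat (y : Fin d → ℤ) : ℝ≥0∞) ^ (-γ)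
      ≤ 8 ^ d * ((2 : ℝ≥0∞) ^ ((d : ℝ) - γ)) ^ k := by
  have hcount : (2 * 2 ^ (k + 1) + 1) ^ d ≤ 8 ^ d * (2 ^ k) ^ d := by
    rw [← mul_pow]
    exact Nat.pow_le_pow_left (by rw [pow_succ]; have := Nat.one_le_two_pow (n := k); omega) d
  calc ∑' y : dyadicShell (d := d) k, (l1Nat (y : Fin d → ℤ) : ℝ≥0∞) ^ (-γ)
      ≤ ((2 * 2 ^ (k + 1) + 1) ^ d : ℕ) * ((2 ^ k : ℕ) : ℝ≥0∞) ^ (-γ) :=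
        tsum_le_of_forall_l1Nat_le (f := fun y => (l1Nat y : ℝ≥0∞) ^ (-γ))
          (fun y hy => hy.2.le) fun y hy =>
          ENNReal.rpow_le_rpow_of_nonpos (by exact_mod_cast hy.1) (by linarith)
    _ ≤ (8 ^ d * (2 ^ k) ^ d : ℕ) * ((2 ^ k : ℕ) : ℝ≥0∞) ^ (-γ) := by gcongr
    _ = 8 ^ d * ((2 : ℝ≥0∞) ^ ((d : ℝ) - γ)) ^ k := by
        rw [ENNReal.rpow_pow_comm, sub_eq_add_neg,
          ENNReal.rpow_add _ _ (by positivity) (ENNReal.pow_ne_top ENNReal.ofNat_ne_top),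
          ENNReal.rpow_natCast]
        push_cast
        ring

theorem exists_tsum_l1Nat_rpow_le_of_lt {β : ℝ} (hβ0 : 0 ≤ β) (hβ : β < d) :
    ∃ C : ℝ≥0∞, C ≠ ⊤ ∧ ∀ b : ℕ, b ≠ 0 →
      ∑' y : {y : Fin d → ℤ | y ≠ 0 ∧ l1Nat y ≤ b}, (l1Nat (y : Fin d → ℤ) : ℝ≥0∞) ^ (-β)
        ≤ C * (b : ℝ≥0∞) ^ ((d : ℝ) - β) := by
  set r : ℝ≥0∞ := 2 ^ ((d : ℝ) - β)
  have hr0 : r ≠ 0 := by positivity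
  have hrt : r ≠ ⊤ := ENNReal.rpow_ne_top_of_nonneg (by linarith) ENNReal.ofNat_ne_top
  have hgeom : (1 - r⁻¹)⁻¹ ≠ ⊤ := by
    refine ENNReal.one_sub_inv_ne_top ?_
    rw [← ENNReal.rpow_neg]
    exact ENNReal.rpow_lt_one_of_one_lt_of_neg ENNReal.one_lt_two (by linarith)
  refine ⟨8 ^ d * (1 - r⁻¹)⁻¹, by finiteness, fun b hb => ?_⟩
  set K := Nat.log 2 b
  have hcover :
      {y : Fin d → ℤ | y ≠ 0 ∧ l1Nat y ≤ b} ⊆ ⋃ k ∈ Finset.range (K + 1), dyadicShell k :=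
    fun y hy => Set.mem_biUnion (Finset.mem_coe.mpr (Finset.mem_range_succ_iff.mpr
      (Nat.log_mono_right hy.2))) (mem_dyadicShell_log (l1Nat_pos hy.1).ne')
  calc ∑' y : {y : Fin d → ℤ | y ≠ 0 ∧ l1Nat y ≤ b}, (l1Nat (y : Fin d → ℤ) : ℝ≥0∞) ^ (-β)
      ≤ ∑ k ∈ Finset.range (K + 1), ∑' y : dyadicShell (d := d) k,
          (l1Nat (y : Fin d → ℤ) : ℝ≥0∞) ^ (-β) :=
        (ENNReal.tsum_mono_subtype (fun y => (l1Nat y : ℝ≥0∞) ^ (-β)) hcover).trans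
          (ENNReal.tsum_biUnion_le (fun y => (l1Nat y : ℝ≥0∞) ^ (-β)) _ dyadicShell)
    _ ≤ ∑ k ∈ Finset.range (K + 1), 8 ^ d * r ^ k :=
        Finset.sum_le_sum fun k _ => tsum_dyadicShell_le hβ0 k
    _ ≤ 8 ^ d * (1 - r⁻¹)⁻¹ * (2 ^ K : ℝ≥0∞) ^ ((d : ℝ) - β) := by
        rw [← Finset.mul_sum, mul_assoc, ← ENNReal.rpow_pow_comm, mul_comm (1 - r⁻¹)⁻¹]
        gcongr
        exact ENNReal.sum_range_succ_pow_le hr0 hrt K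
    _ ≤ 8 ^ d * (1 - r⁻¹)⁻¹ * (b : ℝ≥0∞) ^ ((d : ℝ) - β) := by
        gcongr
        exact_mod_cast Nat.pow_log_le_self 2 hb

theorem exists_tsum_l1Nat_rpow_le_of_gt {γ : ℝ} (hγ : d < γ) :
    ∃ C : ℝ≥0∞, C ≠ ⊤ ∧ ∀ m : ℕ, m ≠ 0 →
      ∑' y : {y : Fin d → ℤ | m ≤ l1Nat y}, (l1Nat (y : Fin d → ℤ) : ℝ≥0∞) ^ (-γ)
        ≤ C * (m : ℝ≥0∞) ^ ((d : ℝ) - γ) := by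
  set r : ℝ≥0∞ := 2 ^ ((d : ℝ) - γ)
  have hgeom : (1 - r)⁻¹ ≠ ⊤ := ENNReal.one_sub_inv_ne_top
    (ENNReal.rpow_lt_one_of_one_lt_of_neg ENNReal.one_lt_two (by linarith))
  refine ⟨8 ^ d * (1 - r)⁻¹ * 2 ^ (γ - d), by finiteness, fun m hm => ?_⟩
  set K := Nat.log 2 m
  have hcover : {y : Fin d → ℤ | m ≤ l1Nat y} ⊆ ⋃ j, dyadicShell (K + j) := fun y hy => by
    have hK : K ≤ Nat.log 2 (l1Nat y) := Nat.log_mono_right hy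
    refine Set.mem_iUnion.mpr ⟨Nat.log 2 (l1Nat y) - K, ?_⟩
    rw [Nat.add_sub_cancel' hK]
    exact mem_dyadicShell_log ((Nat.pos_of_ne_zero hm).trans_le hy).ne'
  have hm2 : m ≤ 2 * 2 ^ K := by
    have : m < 2 ^ (K + 1) := Nat.lt_pow_succ_log_self one_lt_two m
    rw [pow_succ] at this
    omega
  calc ∑' y : {y : Fin d → ℤ | m ≤ l1Nat y}, (l1Nat (y : Fin d → ℤ) : ℝ≥0∞) ^ (-γ)
      ≤ ∑' j, ∑' y : dyadicShell (d := d) (K + j), (l1Nat (y : Fin d → ℤ) : ℝ≥0∞) ^ (-γ) :=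
        (ENNReal.tsum_mono_subtype (fun y => (l1Nat y : ℝ≥0∞) ^ (-γ)) hcover).trans
          (ENNReal.tsum_iUnion_le_tsum (fun y => (l1Nat y : ℝ≥0∞) ^ (-γ)) _)
    _ ≤ ∑' j, 8 ^ d * r ^ K * r ^ j := ENNReal.tsum_le_tsum fun j => by
        rw [mul_assoc, ← pow_add]
        exact tsum_dyadicShell_le ((Nat.cast_nonneg d).trans hγ.le) (K + j)
    _ = 8 ^ d * (1 - r)⁻¹ * ((2 ^ K : ℕ) : ℝ≥0∞) ^ (-(γ - d)) := by
        rw [ENNReal.tsum_mul_left, ENNReal.tsum_geometric, neg_sub,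
          show r ^ K = ((2 : ℝ≥0∞) ^ K) ^ ((d : ℝ) - γ) from ENNReal.rpow_pow_comm _ _ _]
        push_cast
        ring
    _ ≤ 8 ^ d * (1 - r)⁻¹ * (2 ^ (γ - d) * (m : ℝ≥0∞) ^ (-(γ - d))) := by
        gcongr
        exact ENNReal.natCast_rpow_neg_le_of_le_two_mul hm2 (by linarith)
    _ = 8 ^ d * (1 - r)⁻¹ * 2 ^ (γ - d) * (m : ℝ≥0∞) ^ ((d : ℝ) - γ) := by
        rw [neg_sub]
        ring

def closerToZero (x : Fin d → ℤ) : Set (Fin d → ℤ) := {y | y ≠ 0 ∧ l1Nat y ≤ l1Nat (x - y)}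

theorem tsum_mul_sub_le_closerToZero (F G : (Fin d → ℤ) → ℝ≥0∞) (x : Fin d → ℤ) :
    ∑' y : {y : Fin d → ℤ // y ≠ 0 ∧ y ≠ x}, F y * G (x - y)
      ≤ ∑' y : closerToZero x, F y * G (x - y) + ∑' y : closerToZero x, G y * F (x - y) := by
  have hcover : {y | y ≠ 0 ∧ y ≠ x} ⊆ closerToZero x ∪ (x - ·) '' closerToZero x := by
    rintro y ⟨hy0, hyx⟩
    by_cases h : l1Nat y ≤ l1Nat (x - y)
    · exact Or.inl ⟨hy0, h⟩
    · refine Or.inr ⟨x - y, ⟨sub_ne_zero.mpr hyx.symm, ?_⟩, sub_sub_cancel x y⟩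
      rw [sub_sub_cancel]
      exact (not_le.mp h).le
  calc ∑' y : {y : Fin d → ℤ // y ≠ 0 ∧ y ≠ x}, F y * G (x - y)
      ≤ ∑' y : ↥(closerToZero x ∪ (x - ·) '' closerToZero x), F y * G (x - y) :=
        ENNReal.tsum_mono_subtype (fun y => F y * G (x - y)) hcover
    _ ≤ ∑' y : closerToZero x, F y * G (x - y)
          + ∑' y : ↥((x - ·) '' closerToZero x), F y * G (x - y) :=
        ENNReal.tsum_union_le (fun y => F y * G (x - y)) _ _
    _ = _ := by
        rw [tsum_image (fun y => F y * G (x - y)) sub_right_injective.injOn]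
        simp only [sub_sub_cancel, mul_comm]

def powerTerm (β α : ℝ) (x y : Fin d → ℤ) : ℝ≥0∞ :=
  (l1Nat y : ℝ≥0∞) ^ (-β) * (l1Nat (x - y) : ℝ≥0∞) ^ (-α)

theorem powerTerm_le_of_mem_closerToZero {α : ℝ} (hα : 0 ≤ α) (β : ℝ) {x y : Fin d → ℤ}
    (hy : y ∈ closerToZero x) :
    powerTerm β α x y ≤ 2 ^ α * (l1Nat x : ℝ≥0∞) ^ (-α) * (l1Nat y : ℝ≥0∞) ^ (-β) := by
  rw [powerTerm, mul_comm (2 ^ α * _)]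
  exact mul_le_mul_right (ENNReal.natCast_rpow_neg_le_of_le_two_mul
    (by linarith [l1Nat_le_l1Nat_sub_add x y, hy.2]) hα) _

theorem powerTerm_le_rpow_add {α : ℝ} (hα : 0 ≤ α) (β : ℝ) {x y : Fin d → ℤ}
    (hy : y ∈ closerToZero x) : powerTerm β α x y ≤ (l1Nat y : ℝ≥0∞) ^ (-(α + β)) := by
  rw [powerTerm, neg_add, ENNReal.rpow_add _ _ (by exact_mod_cast (l1Nat_pos hy.1).ne') (by simp),
    mul_comm]
  exact mul_le_mul_left (ENNReal.rpow_le_rpow_of_nonpos (by exact_mod_cast hy.2) (by linarith)) _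

def HalfSumBound (β α e : ℝ) : Prop :=
  ∃ C : ℝ≥0∞, C ≠ ⊤ ∧ ∀ x : Fin d → ℤ, x ≠ 0 →
    ∑' y : closerToZero x, powerTerm β α x y ≤ C * (l1Nat x : ℝ≥0∞) ^ e

theorem halfSumBound_of_lt {α β : ℝ} (hβ0 : 0 ≤ β) (hβ : β < d) (hαβ : d < α + β) :
    HalfSumBound (d := d) β α (d - β - α) := by
  obtain ⟨C₁, hC₁, hball⟩ := exists_tsum_l1Nat_rpow_le_of_lt (d := d) hβ0 hβ
  obtain ⟨C₂, hC₂, htail⟩ := exists_tsum_l1Nat_rpow_le_of_gt (d := d) hαβ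
  refine ⟨2 ^ α * C₁ + C₂, by finiteness, fun x hx => ?_⟩
  have hα : 0 ≤ α := by linarith
  set n := l1Nat x
  have hn : n ≠ 0 := (l1Nat_pos hx).ne'
  set near := closerToZero x ∩ {y | l1Nat y ≤ n}
  set far := closerToZero x ∩ {y | n ≤ l1Nat y}
  have hsplit : closerToZero x ⊆ near ∪ far := fun y hy =>
    (le_total (l1Nat y) n).imp (⟨hy, ·⟩) (⟨hy, ·⟩)
  calc ∑' y : closerToZero x, powerTerm β α x y
      ≤ ∑' y : ↥(near ∪ far), powerTerm β α x y := ENNReal.tsum_mono_subtype _ hsplit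
    _ ≤ ∑' y : near, powerTerm β α x y + ∑' y : far, powerTerm β α x y :=
        ENNReal.tsum_union_le _ _ _
    _ ≤ ∑' y : {y : Fin d → ℤ | y ≠ 0 ∧ l1Nat y ≤ n},
            2 ^ α * (n : ℝ≥0∞) ^ (-α) * (l1Nat (y : Fin d → ℤ) : ℝ≥0∞) ^ (-β)
          + ∑' y : {y : Fin d → ℤ | n ≤ l1Nat y}, (l1Nat (y : Fin d → ℤ) : ℝ≥0∞) ^ (-(α + β)) :=
        add_le_add
          (ENNReal.tsum_subtype_le_tsum_subtype
            (g := fun y => 2 ^ α * (n : ℝ≥0∞) ^ (-α) * (l1Nat y : ℝ≥0∞) ^ (-β))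
            (fun y hy => ⟨hy.1.1, hy.2⟩) fun y hy => powerTerm_le_of_mem_closerToZero hα β hy.1)
          (ENNReal.tsum_subtype_le_tsum_subtype (g := fun y => (l1Nat y : ℝ≥0∞) ^ (-(α + β)))
            (fun y hy => hy.2) fun y hy => powerTerm_le_rpow_add hα β hy.1)
    _ ≤ 2 ^ α * (n : ℝ≥0∞) ^ (-α) * (C₁ * (n : ℝ≥0∞) ^ ((d : ℝ) - β))
          + C₂ * (n : ℝ≥0∞) ^ ((d : ℝ) - (α + β)) := by
        rw [ENNReal.tsum_mul_left]
        gcongr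
        exacts [hball n hn, htail n hn]
    _ = (2 ^ α * C₁ + C₂) * (n : ℝ≥0∞) ^ ((d : ℝ) - β - α) := by
        have hpow : (n : ℝ≥0∞) ^ (-α) * (n : ℝ≥0∞) ^ ((d : ℝ) - β)
            = (n : ℝ≥0∞) ^ ((d : ℝ) - β - α) := by
          rw [← ENNReal.rpow_add _ _ (by exact_mod_cast hn) (by simp)]
          ring_nf
        rw [show (d : ℝ) - (α + β) = d - β - α by ring, ← hpow]
        ring

theorem halfSumBound_of_gt {α β : ℝ} (hα : 0 ≤ α) (hβ : d < β) :
    HalfSumBound (d := d) β α (-α) := by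
  obtain ⟨C, hC, htail⟩ := exists_tsum_l1Nat_rpow_le_of_gt (d := d) hβ
  refine ⟨2 ^ α * C, by finiteness, fun x hx => ?_⟩
  calc ∑' y : closerToZero x, powerTerm β α x y
      ≤ ∑' y : {y : Fin d → ℤ | 1 ≤ l1Nat y},
          2 ^ α * (l1Nat x : ℝ≥0∞) ^ (-α) * (l1Nat (y : Fin d → ℤ) : ℝ≥0∞) ^ (-β) :=
        ENNReal.tsum_subtype_le_tsum_subtype
          (g := fun y => 2 ^ α * (l1Nat x : ℝ≥0∞) ^ (-α) * (l1Nat y : ℝ≥0∞) ^ (-β))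
          (fun y hy => l1Nat_pos hy.1) fun y hy => powerTerm_le_of_mem_closerToZero hα β hy
    _ ≤ 2 ^ α * (l1Nat x : ℝ≥0∞) ^ (-α) * (C * ((1 : ℕ) : ℝ≥0∞) ^ ((d : ℝ) - β)) := by
        rw [ENNReal.tsum_mul_left]
        exact mul_le_mul_right (htail 1 one_ne_zero) _
    _ = 2 ^ α * C * (l1Nat x : ℝ≥0∞) ^ (-α) := by
        rw [Nat.cast_one, ENNReal.one_rpow]
        ring

theorem exists_lattice_sum_le_of_halfSumBound {α β e : ℝ} (h₁ : HalfSumBound (d := d) β α e)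
    (h₂ : HalfSumBound (d := d) α β e) :
    ∃ c : ℝ, 0 < c ∧ ∀ x : Fin d → ℤ, x ≠ 0 →
      (∑' y : {y : Fin d → ℤ // y ≠ 0 ∧ y ≠ x},
          ENNReal.ofReal (l1 (y : Fin d → ℤ) ^ (-β) * l1 (x - (y : Fin d → ℤ)) ^ (-α)))
        ≤ ENNReal.ofReal (c * l1 x ^ e) := by
  obtain ⟨C₁, hC₁, h₁⟩ := h₁
  obtain ⟨C₂, hC₂, h₂⟩ := h₂
  refine ⟨(C₁ + C₂).toReal + 1, by positivity, fun x hx => ?_⟩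
  have hterm : ∀ y : {y : Fin d → ℤ // y ≠ 0 ∧ y ≠ x},
      ENNReal.ofReal (l1 (y : Fin d → ℤ) ^ (-β) * l1 (x - (y : Fin d → ℤ)) ^ (-α))
        = powerTerm β α x y := fun y => by
    rw [powerTerm, ENNReal.ofReal_mul (Real.rpow_nonneg (by rw [l1_eq_l1Nat]; positivity) _),
      ofReal_l1_rpow y.2.1, ofReal_l1_rpow (sub_ne_zero.mpr y.2.2.symm)]
  rw [tsum_congr hterm, ENNReal.ofReal_mul (by positivity), ofReal_l1_rpow hx]
  calc _ ≤ _ := tsum_mul_sub_le_closerToZero (fun y => (l1Nat y : ℝ≥0∞) ^ (-β))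
        (fun y => (l1Nat y : ℝ≥0∞) ^ (-α)) x
    _ ≤ (C₁ + C₂) * (l1Nat x : ℝ≥0∞) ^ e := by
        rw [add_mul]
        exact add_le_add (h₁ x hx) (h₂ x hx)
    _ ≤ ENNReal.ofReal ((C₁ + C₂).toReal + 1) * (l1Nat x : ℝ≥0∞) ^ e := by
        gcongr
        exact (ENNReal.le_ofReal_iff_toReal_le (by finiteness) (by positivity)).mpr (by linarith)

end LatticeSum

theorem power_law_lattice_sums_general {d : ℕ} (α β : ℝ) :
    (α < d → β < d → (d : ℝ) < α + β →
      ∃ c : ℝ, 0 < c ∧ ∀ x : Fin d → ℤ, x ≠ 0 →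
        (∑' y : {y : Fin d → ℤ // y ≠ 0 ∧ y ≠ x},
            ENNReal.ofReal (l1 (y : Fin d → ℤ) ^ (-β) * l1 (x - (y : Fin d → ℤ)) ^ (-α)))
          ≤ ENNReal.ofReal (c * l1 x ^ ((d : ℝ) - β - α))) ∧
    ((d : ℝ) < α →
      ∃ c : ℝ, 0 < c ∧ ∀ x : Fin d → ℤ, x ≠ 0 →
        (∑' y : {y : Fin d → ℤ // y ≠ 0 ∧ y ≠ x},
            ENNReal.ofReal (l1 (y : Fin d → ℤ) ^ (-α) * l1 (x - (y : Fin d → ℤ)) ^ (-α)))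
          ≤ ENNReal.ofReal (c * l1 x ^ (-α))) := by
  refine ⟨fun hαd hβd hαβ => ?_, fun hdα => ?_⟩
  · have hswap := LatticeSum.halfSumBound_of_lt (d := d) (α := β) (by linarith) hαd (by linarith)
    rw [sub_right_comm] at hswap
    exact LatticeSum.exists_lattice_sum_le_of_halfSumBound
      (LatticeSum.halfSumBound_of_lt (by linarith) hβd hαβ) hswap
  · have hB := LatticeSum.halfSumBound_of_gt (d := d) ((Nat.cast_nonneg d).trans hdα.le) hdα
    exact LatticeSum.exists_lattice_sum_le_of_halfSumBound hB hB

/-- **Power-law lattice sums** (Corollary 2.4). For `α, β > 0` there is a constant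
`c > 0` depending only on `α`, `β` and `d` such that for every `x ∈ ℤ^d \ {0}`:
(a) if `0 < α, β < d` and `α + β > d`, then
`Σ_{y ≠ 0, x} ‖y‖₁^{-β} ‖x-y‖₁^{-α} ≤ c ‖x‖₁^{d-β-α}`;
(b) if `α > d`, then `Σ_{y ≠ 0, x} ‖y‖₁^{-α} ‖x-y‖₁^{-α} ≤ c ‖x‖₁^{-α}`. -/
theorem power_law_lattice_sums {d : ℕ} (hd : 1 ≤ d) (α β : ℝ) (hα : 0 < α) (hβ : 0 < β) :
    (α < d → β < d → (d : ℝ) < α + β →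
      ∃ c : ℝ, 0 < c ∧ ∀ x : Fin d → ℤ, x ≠ 0 →
        (∑' y : {y : Fin d → ℤ // y ≠ 0 ∧ y ≠ x},
            ENNReal.ofReal (l1 (y : Fin d → ℤ) ^ (-β) * l1 (x - (y : Fin d → ℤ)) ^ (-α)))
          ≤ ENNReal.ofReal (c * l1 x ^ ((d : ℝ) - β - α))) ∧
    ((d : ℝ) < α →
      ∃ c : ℝ, 0 < c ∧ ∀ x : Fin d → ℤ, x ≠ 0 →
        (∑' y : {y : Fin d → ℤ // y ≠ 0 ∧ y ≠ x},
            ENNReal.ofReal (l1 (y : Fin d → ℤ) ^ (-α) * l1 (x - (y : Fin d → ℤ)) ^ (-α)))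
          ≤ ENNReal.ofReal (c * l1 x ^ (-α))) :=
  power_law_lattice_sums_general α β
end
end
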